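/- Let n ≥ 1, let a = y₀ < y₁ < ... < y_n = b, let A_i be continuous matrix-valued functions on [y_{i-1}, y_i], and let invertible conjugation matrices B_i (with D_i arbitrary) be given at each interior point y_i, i = 1..n−1. Let Φ_i be the fundamental matrix on [y_{i-1}, y_i] with Φ_i(y_{i-1}) = 1, and define transfer matrices U_1 = 1 and U_{i+1} = B_i⁻¹ D_i Φ_i(y_i) U_i. Then for N = 2m, a nonzero piecewise solution z (solving z' = A_i(y)z on each subinterval and satisfying the conjugation conditions D_i z^{(i)}(y_i) = B_i z^{(i+1)}(y_i)) with z_r(y₀) = 0 for r < m and z_s(y_n) = 0 for m ≤ s < N exists if and only if det M = 0, where M is the m × m matrix with entries M_{s,q} = (Φ_n(y_n) • U_n)_{s,q} for m ≤ s, q < N. -/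

import Mathlib

/-!
A piecewise solution is determined by its initial value `c = z₁(y₀)`: by uniqueness for linear
ODEs it equals `Φᵢ(t) Uᵢ c` on the `i`-th interval, the conjugation conditions being exactly the
recurrence defining `Uᵢ₊₁`. The left boundary condition says that `c` is supported on the last
`m` coordinates, and the right one that the last `m` rows of `Φₙ(yₙ) Uₙ` annihilate `c`; a nonzero
such `c` exists iff the lower-right `m × m` block of `Φₙ(yₙ) Uₙ` is singular.
-/

open Matrix Set

namespace Matrix

variable {ι : Type*} [Fintype ι]

theorem hasDerivWithinAt_mulVec_const {Φ : ℝ → Matrix ι ι ℝ} {Φ' : Matrix ι ι ℝ} {s : Set ℝ}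
    {t : ℝ} (h : ∀ k j, HasDerivWithinAt (fun t' => Φ t' k j) (Φ' k j) s t) (c : ι → ℝ) :
    HasDerivWithinAt (fun t' => Φ t' *ᵥ c) (Φ' *ᵥ c) s t :=
  hasDerivWithinAt_pi.2 fun k => HasDerivWithinAt.fun_sum fun j _ => (h k j).mul_const (c j)

theorem eqOn_Icc_of_hasDerivWithinAt_mulVec [DecidableEq ι] {A : ℝ → Matrix ι ι ℝ} {a b : ℝ}
    (hA : ContinuousOn A (Icc a b)) {f g : ℝ → ι → ℝ}
    (hf : ∀ t ∈ Icc a b, HasDerivWithinAt f (A t *ᵥ f t) (Icc a b) t)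
    (hg : ∀ t ∈ Icc a b, HasDerivWithinAt g (A t *ᵥ g t) (Icc a b) t) (ha : f a = g a) :
    EqOn f g (Icc a b) := by
  let L : Matrix ι ι ℝ ≃ₗ[ℝ] ((ι → ℝ) →L[ℝ] (ι → ℝ)) :=
    Matrix.toLin'.trans LinearMap.toContinuousLinearMap
  have hL : ∀ M x, L M x = M *ᵥ x := fun _ _ => rfl
  obtain ⟨C, hC⟩ := isCompact_Icc.exists_bound_of_continuousOn
    (L.toLinearMap.continuous_of_finiteDimensional.comp_continuousOn hA)
  have hlip : ∀ t ∈ Ico a b, LipschitzOnWith C.toNNReal (A t *ᵥ ·) univ := by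
    intro t ht
    simp only [← hL]
    refine ((L (A t)).lipschitz.weaken ?_).lipschitzOnWith
    rw [← NNReal.coe_le_coe, coe_nnnorm]
    exact (hC t (Ico_subset_Icc_self ht)).trans (le_max_left _ _)
  have hright : ∀ h : ℝ → ι → ℝ, (∀ t ∈ Icc a b, HasDerivWithinAt h (A t *ᵥ h t) (Icc a b) t) →
      ∀ t ∈ Ico a b, HasDerivWithinAt h (A t *ᵥ h t) (Ici t) t := fun h hh t ht =>
    (hh t (Ico_subset_Icc_self ht)).mono_of_mem_nhdsWithin (Icc_mem_nhdsGE_of_mem ht)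
  exact ODE_solution_unique_of_mem_Icc_right hlip
    (fun t ht => (hf t ht).continuousWithinAt) (hright f hf) (fun _ _ => mem_univ _)
    (fun t ht => (hg t ht).continuousWithinAt) (hright g hg) (fun _ _ => mem_univ _) ha

variable {R κ : Type*} [CommRing R] [Fintype κ]

theorem mulVec_apply_eq_sum_of_support_subset_range (M : Matrix ι ι R) {e : κ → ι}
    (he : Function.Injective e) {c : ι → R} (hc : ∀ j ∉ range e, c j = 0) (i : ι) :
    (M *ᵥ c) i = ∑ q, M i (e q) * c (e q) :=
  (Fintype.sum_of_injective e he _ _ (fun j hj => by rw [hc j hj, mul_zero]) fun _ => rfl).symm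

theorem det_submatrix_eq_zero_iff [IsDomain R] [DecidableEq κ] (M : Matrix ι ι R)
    {e : κ → ι} (he : Function.Injective e) :
    (M.submatrix e e).det = 0 ↔
      ∃ c ≠ 0, (∀ j ∉ range e, c j = 0) ∧ ∀ q, (M *ᵥ c) (e q) = 0 := by
  rw [← exists_mulVec_eq_zero_iff]
  constructor
  · rintro ⟨u, hu, hMu⟩
    have hc_range : ∀ q, Function.extend e u 0 (e q) = u q := he.extend_apply u 0
    have hc_off : ∀ j ∉ range e, Function.extend e u 0 j = 0 :=
      fun j hj => Function.extend_apply' _ _ _ hj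
    refine ⟨Function.extend e u 0, fun h => hu (funext fun q => by simp [← hc_range, h]),
      hc_off, fun q => ?_⟩
    rw [M.mulVec_apply_eq_sum_of_support_subset_range he hc_off]
    simpa [hc_range, mulVec, dotProduct] using congrFun hMu q
  · rintro ⟨c, hc, hc_off, hMc⟩
    refine ⟨c ∘ e, fun h => hc (funext fun j => ?_), funext fun q => ?_⟩
    · by_cases hj : j ∈ range e
      · obtain ⟨q, rfl⟩ := hj
        exact congrFun h q
      · exact hc_off j hj
    · exact (M.mulVec_apply_eq_sum_of_support_subset_range he hc_off _).symm.trans (hMc q)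

end Matrix

section LowerBlock

variable {m : ℕ}

def lowerIdx (s : Fin m) : Fin (2 * m) := ⟨m + s, by omega⟩

theorem lowerIdx_injective : Function.Injective (lowerIdx (m := m)) :=
  fun s q h => Fin.ext (by simpa [lowerIdx] using congrArg Fin.val h)

theorem mem_range_lowerIdx_iff {j : Fin (2 * m)} : j ∈ range lowerIdx ↔ m ≤ (j : ℕ) :=
  ⟨by rintro ⟨s, rfl⟩; simp [lowerIdx],
    fun hj => ⟨⟨j - m, by omega⟩, Fin.ext (by simp [lowerIdx]; omega)⟩⟩

theorem Matrix.det_submatrix_lowerIdx_eq_zero_iff {R : Type*} [CommRing R] [IsDomain R]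
    (M : Matrix (Fin (2 * m)) (Fin (2 * m)) R) :
    (M.submatrix lowerIdx lowerIdx).det = 0 ↔
      ∃ c ≠ 0, (∀ r : Fin (2 * m), (r : ℕ) < m → c r = 0) ∧
        ∀ s : Fin (2 * m), m ≤ (s : ℕ) → (M *ᵥ c) s = 0 := by
  simp only [M.det_submatrix_eq_zero_iff lowerIdx_injective, mem_range_lowerIdx_iff, not_le]
  refine exists_congr fun c => and_congr_right fun _ => and_congr_right fun _ =>
    ⟨fun h s hs => ?_, fun h q => h _ (mem_range_lowerIdx_iff.1 ⟨q, rfl⟩)⟩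
  obtain ⟨q, rfl⟩ := mem_range_lowerIdx_iff.2 hs
  exact h q

end LowerBlock

section TransferMatrices

variable {ι : Type*} [Fintype ι]

def transferSolution (Φ : ℕ → ℝ → Matrix ι ι ℝ) (U : ℕ → Matrix ι ι ℝ) (c : ι → ℝ) :
    ℕ → ℝ → ι → ℝ :=
  fun i t => Φ i t *ᵥ (U i *ᵥ c)

theorem transferSolution_hasDerivWithinAt {Φ : ℕ → ℝ → Matrix ι ι ℝ} {U : ℕ → Matrix ι ι ℝ}
    {A : ℝ → Matrix ι ι ℝ} {i : ℕ} {s : Set ℝ} {t : ℝ}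
    (hΦ : ∀ k j, HasDerivWithinAt (fun t' => Φ i t' k j) ((A t * Φ i t) k j) s t) (c : ι → ℝ) :
    HasDerivWithinAt (transferSolution Φ U c i) (A t *ᵥ transferSolution Φ U c i t) s t := by
  show HasDerivWithinAt (fun t' => Φ i t' *ᵥ (U i *ᵥ c)) (A t *ᵥ (Φ i t *ᵥ (U i *ᵥ c))) s t
  rw [mulVec_mulVec]
  exact hasDerivWithinAt_mulVec_const hΦ (U i *ᵥ c)

theorem transferSolution_conj [DecidableEq ι] {Φ : ℕ → ℝ → Matrix ι ι ℝ}
    {U : ℕ → Matrix ι ι ℝ} {B D : Matrix ι ι ℝ} {i : ℕ} {t : ℝ} (hB : IsUnit B)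
    (hU : U (i + 1) = B⁻¹ * D * Φ i t * U i) (hΦ : Φ (i + 1) t = 1) (c : ι → ℝ) :
    D *ᵥ transferSolution Φ U c i t = B *ᵥ transferSolution Φ U c (i + 1) t := by
  simp only [transferSolution, hΦ, hU, mulVec_mulVec, Matrix.one_mul, Matrix.mul_assoc,
    mul_nonsing_inv_cancel_left (h := (isUnit_iff_isUnit_det B).1 hB)]

theorem eqOn_transferSolution [DecidableEq ι] {n : ℕ} {y : ℕ → ℝ}
    (hy : ∀ i < n, y i < y (i + 1))
    {A : ℕ → ℝ → Matrix ι ι ℝ}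
    (hA : ∀ i, 1 ≤ i → i ≤ n → ContinuousOn (A i) (Icc (y (i - 1)) (y i)))
    {B D : ℕ → Matrix ι ι ℝ} (hB : ∀ i, 1 ≤ i → i ≤ n - 1 → IsUnit (B i))
    {Φ : ℕ → ℝ → Matrix ι ι ℝ}
    (hΦ : ∀ i, 1 ≤ i → i ≤ n → ∀ t ∈ Icc (y (i - 1)) (y i), ∀ k j,
      HasDerivWithinAt (fun t' => Φ i t' k j) ((A i t * Φ i t) k j) (Icc (y (i - 1)) (y i)) t)
    (hΦinit : ∀ i, 1 ≤ i → i ≤ n → Φ i (y (i - 1)) = 1)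
    {U : ℕ → Matrix ι ι ℝ} (hU1 : U 1 = 1)
    (hUrec : ∀ i, 1 ≤ i → i ≤ n - 1 → U (i + 1) = (B i)⁻¹ * D i * Φ i (y i) * U i)
    {z : ℕ → ℝ → ι → ℝ}
    (hz : ∀ i, 1 ≤ i → i ≤ n → ∀ t ∈ Icc (y (i - 1)) (y i),
      HasDerivWithinAt (z i) (A i t *ᵥ z i t) (Icc (y (i - 1)) (y i)) t)
    (hzc : ∀ i, 1 ≤ i → i ≤ n - 1 → D i *ᵥ z i (y i) = B i *ᵥ z (i + 1) (y i)) :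
    ∀ i, 1 ≤ i → i ≤ n →
      EqOn (z i) (transferSolution Φ U (z 1 (y 0)) i) (Icc (y (i - 1)) (y i)) := by
  have hT : ∀ i, 1 ≤ i → i ≤ n → ∀ t ∈ Icc (y (i - 1)) (y i), HasDerivWithinAt
      (transferSolution Φ U (z 1 (y 0)) i) (A i t *ᵥ transferSolution Φ U (z 1 (y 0)) i t)
      (Icc (y (i - 1)) (y i)) t :=
    fun i h1 h2 t ht => transferSolution_hasDerivWithinAt (hΦ i h1 h2 t ht) _
  intro i hi
  induction i, hi using Nat.le_induction with
  | base =>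
    intro hn
    refine eqOn_Icc_of_hasDerivWithinAt_mulVec (hA 1 le_rfl hn) (hz 1 le_rfl hn)
      (hT 1 le_rfl hn) ?_
    simp only [transferSolution, hΦinit 1 le_rfl hn, hU1, one_mulVec]
  | succ k hk ih =>
    intro hkn
    have hzk : z k (y k) = transferSolution Φ U (z 1 (y 0)) k (y k) :=
      ih (by omega) ⟨(hy (k - 1) (by omega)).le.trans_eq (by rw [Nat.sub_add_cancel hk]), le_rfl⟩
    have hinit : z (k + 1) (y k) = transferSolution Φ U (z 1 (y 0)) (k + 1) (y k) := by
      refine mulVec_injective_of_isUnit (hB k hk (by omega)) ?_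
      rw [← hzc k hk (by omega), hzk, transferSolution_conj (hB k hk (by omega))
        (hUrec k hk (by omega)) (hΦinit (k + 1) (by omega) hkn)]
    exact eqOn_Icc_of_hasDerivWithinAt_mulVec (hA (k + 1) (by omega) hkn)
      (hz (k + 1) (by omega) hkn) (hT (k + 1) (by omega) hkn) hinit

end TransferMatrices

/-- Multi-interval boundary problem with conjugation conditions: a nontrivial
piecewise solution with z_r(y₀)=0 (r<m), z_s(y_n)=0 (m≤s<2m) exists iff the
determinant of the lower-right m×m block of Φ_n(y_n) U_n vanishes, where the
transfer matrices satisfy U_1 = 1, U_{i+1} = B_i⁻¹ D_i Φ_i(y_i) U_i. -/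
theorem stmt_10 {m : ℕ} (n : ℕ) (hn : 1 ≤ n) (y : ℕ → ℝ)
    (hy : ∀ i < n, y i < y (i+1))
    (A : ℕ → ℝ → Matrix (Fin (2*m)) (Fin (2*m)) ℝ)
    (hA : ∀ i, 1 ≤ i → i ≤ n → ContinuousOn (A i) (Set.Icc (y (i-1)) (y i)))
    (B D : ℕ → Matrix (Fin (2*m)) (Fin (2*m)) ℝ)
    (hB : ∀ i, 1 ≤ i → i ≤ n - 1 → IsUnit (B i))
    (Φ : ℕ → ℝ → Matrix (Fin (2*m)) (Fin (2*m)) ℝ)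
    (hΦ : ∀ i, 1 ≤ i → i ≤ n → ∀ t ∈ Set.Icc (y (i-1)) (y i), ∀ k j,
      HasDerivWithinAt (fun t' => Φ i t' k j) ((A i t * Φ i t) k j)
        (Set.Icc (y (i-1)) (y i)) t)
    (hΦinit : ∀ i, 1 ≤ i → i ≤ n → Φ i (y (i-1)) = 1)
    (U : ℕ → Matrix (Fin (2*m)) (Fin (2*m)) ℝ)
    (hU1 : U 1 = 1)
    (hUrec : ∀ i, 1 ≤ i → i ≤ n - 1 → U (i+1) = (B i)⁻¹ * D i * Φ i (y i) * U i) :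
    (∃ z : ℕ → ℝ → Fin (2*m) → ℝ,
      (∀ i, 1 ≤ i → i ≤ n → ∀ t ∈ Set.Icc (y (i-1)) (y i),
        HasDerivWithinAt (z i) (A i t *ᵥ z i t) (Set.Icc (y (i-1)) (y i)) t) ∧
      (∀ i, 1 ≤ i → i ≤ n - 1 → D i *ᵥ z i (y i) = B i *ᵥ z (i+1) (y i)) ∧
      (∀ r : Fin (2*m), (r : ℕ) < m → z 1 (y 0) r = 0) ∧
      (∀ s : Fin (2*m), m ≤ (s : ℕ) → z n (y n) s = 0) ∧
      (∃ i, 1 ≤ i ∧ i ≤ n ∧ ∃ t ∈ Set.Icc (y (i-1)) (y i), z i t ≠ 0))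
    ↔ Matrix.det (Matrix.of fun s q : Fin m =>
        (Φ n (y n) * U n) ⟨m + s, by have := s.isLt; omega⟩
          ⟨m + q, by have := q.isLt; omega⟩) = 0 := by
  have hy0 : y 0 ≤ y 1 := (hy 0 (by omega)).le
  have hyn : y n ∈ Icc (y (n - 1)) (y n) :=
    ⟨(hy (n - 1) (by omega)).le.trans_eq (by rw [Nat.sub_add_cancel hn]), le_rfl⟩
  have hT_init : ∀ c, transferSolution Φ U c 1 (y 0) = c := fun c => by
    simp only [transferSolution, hΦinit 1 le_rfl hn, hU1, one_mulVec]
  have hT_end : ∀ c, transferSolution Φ U c n (y n) = (Φ n (y n) * U n) *ᵥ c :=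
    fun c => mulVec_mulVec _ _ _
  change _ ↔ ((Φ n (y n) * U n).submatrix lowerIdx lowerIdx).det = 0
  rw [det_submatrix_lowerIdx_eq_zero_iff]
  constructor
  · rintro ⟨z, hz, hzc, hz0, hzn, i, hi1, hin, t, ht, hzt⟩
    have hzT := eqOn_transferSolution hy hA hB hΦ hΦinit hU1 hUrec hz hzc
    refine ⟨z 1 (y 0), fun hc => hzt ?_, hz0, fun s hs => ?_⟩
    · rw [hzT i hi1 hin ht, hc]
      simp [transferSolution]
    · rw [← hT_end, ← hzT n hn le_rfl hyn]
      exact hzn s hs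
  · rintro ⟨c, hc, hc0, hcn⟩
    refine ⟨transferSolution Φ U c,
      fun i h1 h2 t ht => transferSolution_hasDerivWithinAt (hΦ i h1 h2 t ht) c,
      fun i h1 h2 => transferSolution_conj (hB i h1 h2) (hUrec i h1 h2)
        (hΦinit (i + 1) (by omega) (by omega)) c,
      by rwa [hT_init], by rwa [hT_end], 1, le_rfl, hn, y 0, ⟨le_rfl, hy0⟩, by rwa [hT_init]⟩
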